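/- arXiv:1008.4164 — 3 statements merged into one kernel-verified Lean document; each statement's English description precedes it below -/
import Mathlib

section
/- If M is a comultiplication module (every submodule L satisfies L = (0 :_M ann_R(L))), then M is coprime if and only if ann_R(M) is a prime ideal. -/
section Prelim

variable {R : Type*} [Ring R] {M : Type*} [AddCommGroup M] [Module R M]

/-- A left ideal of `R` is two-sided. -/
def IsTwoSidedIdeal (I : Ideal R) : Prop := ∀ r ∈ I, ∀ s : R, r * s ∈ I

/-- `M` is a coprime module: `IM = M` or `IM = 0` for every two-sided ideal `I`. -/
def IsCoprimeModule (R M : Type*) [Ring R] [AddCommGroup M] [Module R M] : Prop :=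
  ∀ I : Ideal R, IsTwoSidedIdeal I →
    I • (⊤ : Submodule R M) = ⊤ ∨ I • (⊤ : Submodule R M) = ⊥

/-- A proper submodule `K ⊊ M` is a coprime submodule of `M`:
`IM + K = M` or `IM ⊆ K` for every two-sided ideal `I`. -/
def IsCoprimeSubmodule (K : Submodule R M) : Prop :=
  K ≠ ⊤ ∧ ∀ I : Ideal R, IsTwoSidedIdeal I →
    I • (⊤ : Submodule R M) ⊔ K = ⊤ ∨ I • (⊤ : Submodule R M) ≤ K

/-- A nonzero submodule `K ≤ M` is second: `IK = K` or `IK = 0`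
for every two-sided ideal `I`. -/
def IsSecondSubmodule (K : Submodule R M) : Prop :=
  K ≠ ⊥ ∧ ∀ I : Ideal R, IsTwoSidedIdeal I → I • K = K ∨ I • K = ⊥

/-- The ideal `(K :_R M) = {r | r • M ⊆ K}`. -/
def colonIdeal (K : Submodule R M) : Ideal R where
  carrier := {r : R | ∀ m : M, r • m ∈ K}
  zero_mem' := by intro m; rw [zero_smul]; exact K.zero_mem
  add_mem' := by intro a b ha hb m; rw [add_smul]; exact K.add_mem (ha m) (hb m)
  smul_mem' := by intro s r hr m; rw [smul_eq_mul, mul_smul]; exact K.smul_mem s (hr m)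

/-- The annihilator `(0 :_M I)` of a two-sided ideal `I` in `M`. -/
def annSubmodule (I : Ideal R) (hI : IsTwoSidedIdeal I) : Submodule R M where
  carrier := {m : M | ∀ r ∈ I, r • m = 0}
  zero_mem' := by intro r _; exact smul_zero r
  add_mem' := by intro a b ha hb r hr; rw [smul_add, ha r hr, hb r hr, add_zero]
  smul_mem' := by intro s m hm r hr; rw [← mul_smul]; exact hm _ (hI r hr s)

/-- A nonzero submodule `K` is strongly hollow in `M`. -/
def StronglyHollowIn (K : Submodule R M) : Prop :=
  K ≠ ⊥ ∧ ∀ L₁ L₂ : Submodule R M, K ≤ L₁ ⊔ L₂ → K ≤ L₁ ∨ K ≤ L₂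

/-- A proper submodule `K` is strongly irreducible in `M`. -/
def StronglyIrreducibleIn (K : Submodule R M) : Prop :=
  K ≠ ⊤ ∧ ∀ L₁ L₂ : Submodule R M, L₁ ⊓ L₂ ≤ K → L₁ ≤ K ∨ L₂ ≤ K

/-- `V^s(L)`: the second submodules of `M` contained in `L`. -/
def secondVariety (L : Submodule R M) : Set (Submodule R M) :=
  {K | IsSecondSubmodule K ∧ K ≤ L}

/-- `V^c(L)`: the coprime submodules of `M` containing `L`. -/
def coprimeVariety (L : Submodule R M) : Set (Submodule R M) :=
  {K | IsCoprimeSubmodule K ∧ L ≤ K}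

lemma IsTwoSidedIdeal.inf {I J : Ideal R} (hI : IsTwoSidedIdeal I)
    (hJ : IsTwoSidedIdeal J) : IsTwoSidedIdeal (I ⊓ J) := by
  intro r hr s
  rw [Submodule.mem_inf] at hr ⊢
  exact ⟨hI r hr.1 s, hJ r hr.2 s⟩

lemma IsTwoSidedIdeal.mul {I J : Ideal R} (hJ : IsTwoSidedIdeal J) :
    IsTwoSidedIdeal (I * J) := by
  intro r hr s
  refine Submodule.smul_induction_on hr ?_ ?_
  · intro a ha b hb
    rw [smul_eq_mul, mul_assoc]
    exact Ideal.mul_mem_mul ha (hJ b hb s)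
  · intro x y hx hy
    rw [add_mul]
    exact Ideal.add_mem _ hx hy

end Prelim

/-- The comultiplication condition `L = (0 :_M ann_R(L))` for every submodule `L`. -/
def IsComultiplicationModule (R M : Type*) [Ring R] [AddCommGroup M] [Module R M] : Prop :=
  ∀ L : Submodule R M, (L : Set M) = {m : M | ∀ r : R, (∀ x ∈ L, r • x = 0) → r • m = 0}

/-- Primality tested on products of two-sided ideals, not of elements. -/
def IsTwoSidedPrime {R : Type*} [Ring R] (P : Ideal R) : Prop :=
  P ≠ ⊤ ∧ ∀ I J : Ideal R, IsTwoSidedIdeal I → IsTwoSidedIdeal J →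
    (∀ a ∈ I, ∀ b ∈ J, a * b ∈ P) → I ≤ P ∨ J ≤ P

section Coprime

variable {R M : Type*} [Ring R] [AddCommGroup M] [Module R M]

open Submodule

lemma IsTwoSidedIdeal.of_isTwoSided (I : Ideal R) [I.IsTwoSided] : IsTwoSidedIdeal I :=
  fun _ hr s ↦ I.mul_mem_right s hr

lemma smul_top_eq_bot_iff_le_annihilator {I : Ideal R} :
    I • (⊤ : Submodule R M) = ⊥ ↔ I ≤ Module.annihilator R M := by
  rw [← annihilator_top, le_annihilator_iff]

lemma IsComultiplicationModule.eq_top_of_annihilator_le (hM : IsComultiplicationModule R M)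
    {N : Submodule R M} (hN : N.annihilator ≤ Module.annihilator R M) : N = ⊤ := by
  refine eq_top_iff'.2 fun m ↦ ?_
  change m ∈ (N : Set M)
  rw [hM N]
  exact fun r hr ↦ Module.mem_annihilator.1 (hN (mem_annihilator.2 hr)) m

lemma IsCoprimeModule.isTwoSidedPrime_annihilator [Nontrivial M] (hM : IsCoprimeModule R M) :
    IsTwoSidedPrime (Module.annihilator R M) := by
  refine ⟨fun h ↦ not_subsingleton M (Module.annihilator_eq_top_iff.1 h),
    fun I J _ hJ hIJ ↦ ?_⟩
  simp only [← smul_top_eq_bot_iff_le_annihilator]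
  rcases hM J hJ with hJM | hJM
  · left
    rw [← hJM, ← Submodule.mul_smul, smul_top_eq_bot_iff_le_annihilator]
    exact Ideal.mul_le.2 hIJ
  · exact Or.inr hJM

/-- Apply primality to `ann(IM) · I`, which kills `M`: either `I` kills `M`, or
`ann(IM) ≤ ann(M)` and then `IM = M` by the comultiplication property. -/
lemma IsComultiplicationModule.isCoprimeModule (hM : IsComultiplicationModule R M)
    (hP : IsTwoSidedPrime (Module.annihilator R M)) : IsCoprimeModule R M := by
  intro I hI
  have hkill : (I • (⊤ : Submodule R M)).annihilator * I ≤ Module.annihilator R M := by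
    rw [← smul_top_eq_bot_iff_le_annihilator, Submodule.mul_smul, annihilator_smul]
  rcases hP.2 _ I (.of_isTwoSided _) hI
      (fun a ha b hb ↦ hkill (Ideal.mul_mem_mul ha hb)) with h | h
  · exact Or.inl (hM.eq_top_of_annihilator_le h)
  · exact Or.inr (smul_top_eq_bot_iff_le_annihilator.2 h)

end Coprime

/-- If `M` is a comultiplication module (every submodule `L` equals
`(0 :_M ann_R(L))`), then `M` is coprime iff `ann_R(M)` is a prime ideal. -/
theorem statement6 {R M : Type*} [Ring R] [AddCommGroup M] [Module R M] [Nontrivial M]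
    (hcomul : ∀ L : Submodule R M,
      (L : Set M) = {m : M | ∀ r : R, (∀ x ∈ L, r • x = 0) → r • m = 0}) :
    IsCoprimeModule R M ↔
      (Module.annihilator R M ≠ ⊤ ∧
        ∀ I J : Ideal R, IsTwoSidedIdeal I → IsTwoSidedIdeal J →
          (∀ a ∈ I, ∀ b ∈ J, a * b ∈ Module.annihilator R M) →
          I ≤ Module.annihilator R M ∨ J ≤ Module.annihilator R M) :=
  ⟨IsCoprimeModule.isTwoSidedPrime_annihilator,
    IsComultiplicationModule.isCoprimeModule hcomul⟩
end

section
/- For any two ideals I, Ĩ of R: the set of coprime submodules of M containing I•M ∩ Ĩ•M equals the union of the sets of coprime submodules containing I•M and containing Ĩ•M, and both equal the set of coprime submodules containing (IĨ)•M. -/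
lemma IsTwoSidedIdeal.isTwoSided {R : Type*} [Ring R] {I : Ideal R} (hI : IsTwoSidedIdeal I) :
    I.IsTwoSided :=
  ⟨fun b ha => hI _ ha b⟩

section CoprimeVariety

variable {R M : Type*} [Ring R] [AddCommGroup M] [Module R M]

lemma coprimeVariety_antitone : Antitone (coprimeVariety (R := R) (M := M)) :=
  fun _ _ h _ hK => ⟨hK.1, h.trans hK.2⟩

lemma union_subset_coprimeVariety_inf (L₁ L₂ : Submodule R M) :
    coprimeVariety L₁ ∪ coprimeVariety L₂ ⊆ coprimeVariety (L₁ ⊓ L₂) :=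
  Set.union_subset (coprimeVariety_antitone inf_le_left) (coprimeVariety_antitone inf_le_right)

lemma mul_smul_top_sup_eq_top {I J : Ideal R} {K : Submodule R M}
    (hI : I • (⊤ : Submodule R M) ⊔ K = ⊤) (hJ : J • (⊤ : Submodule R M) ⊔ K = ⊤) :
    (I * J) • (⊤ : Submodule R M) ⊔ K = ⊤ := by
  refine eq_top_iff.2 ?_
  calc (⊤ : Submodule R M) = I • (J • ⊤ ⊔ K) ⊔ K := by rw [hJ, hI]
    _ = I • J • ⊤ ⊔ I • K ⊔ K := by rw [Submodule.smul_sup]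
    _ ≤ I • J • ⊤ ⊔ K := sup_le (sup_le_sup_left Submodule.smul_le_right _) le_sup_right
    _ = (I * J) • ⊤ ⊔ K := by rw [Submodule.mul_smul]

lemma IsCoprimeSubmodule.smul_top_le_or_smul_top_le {K : Submodule R M}
    (hK : IsCoprimeSubmodule K) {I J : Ideal R} (hI : IsTwoSidedIdeal I) (hJ : IsTwoSidedIdeal J)
    (hIJ : (I * J) • (⊤ : Submodule R M) ≤ K) :
    I • (⊤ : Submodule R M) ≤ K ∨ J • (⊤ : Submodule R M) ≤ K := by
  rcases hK.2 I hI with hIK | hIK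
  · rcases hK.2 J hJ with hJK | hJK
    · exact absurd (sup_eq_right.2 hIJ ▸ mul_smul_top_sup_eq_top hIK hJK) hK.1
    · exact Or.inr hJK
  · exact Or.inl hIK

lemma coprimeVariety_mul_smul_top {I J : Ideal R} (hI : IsTwoSidedIdeal I)
    (hJ : IsTwoSidedIdeal J) :
    coprimeVariety ((I * J) • (⊤ : Submodule R M)) =
      coprimeVariety (I • (⊤ : Submodule R M)) ∪ coprimeVariety (J • (⊤ : Submodule R M)) := by
  refine Set.Subset.antisymm (fun K hK => ?_) (Set.union_subset ?_ ?_)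
  · exact (hK.1.smul_top_le_or_smul_top_le hI hJ hK.2).imp (⟨hK.1, ·⟩) (⟨hK.1, ·⟩)
  · rw [Submodule.mul_smul]
    exact coprimeVariety_antitone (smul_mono_right I le_top)
  · rw [Submodule.mul_smul]
    exact coprimeVariety_antitone Submodule.smul_le_right

end CoprimeVariety

/-- For two-sided ideals `I, Ĩ` of `R`:
`V^c(IM) ∪ V^c(ĨM) = V^c(IM ∩ ĨM) = V^c((I ∩ Ĩ)M) = V^c((IĨ)M)`. -/
theorem statement16 {R M : Type*} [Ring R] [AddCommGroup M] [Module R M]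
    (I J : Ideal R) (hI : IsTwoSidedIdeal I) (hJ : IsTwoSidedIdeal J) :
    coprimeVariety (I • (⊤ : Submodule R M) ⊓ J • (⊤ : Submodule R M)) =
        coprimeVariety (I • (⊤ : Submodule R M)) ∪
          coprimeVariety (J • (⊤ : Submodule R M)) ∧
      coprimeVariety (I • (⊤ : Submodule R M) ⊓ J • (⊤ : Submodule R M)) =
        coprimeVariety ((I ⊓ J) • (⊤ : Submodule R M)) ∧
      coprimeVariety (I • (⊤ : Submodule R M) ⊓ J • (⊤ : Submodule R M)) =
        coprimeVariety ((I * J) • (⊤ : Submodule R M)) := by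
  have hV_mul := coprimeVariety_mul_smul_top (M := M) hI hJ
  have hV_inf_smul : coprimeVariety (I • (⊤ : Submodule R M) ⊓ J • (⊤ : Submodule R M)) ⊆
      coprimeVariety ((I ⊓ J) • (⊤ : Submodule R M)) :=
    coprimeVariety_antitone <|
      le_inf (Submodule.smul_mono_left inf_le_left) (Submodule.smul_mono_left inf_le_right)
  have hV_mul_smul : coprimeVariety ((I ⊓ J) • (⊤ : Submodule R M)) ⊆
      coprimeVariety ((I * J) • (⊤ : Submodule R M)) :=
    haveI := hI.isTwoSided
    coprimeVariety_antitone (Submodule.smul_mono_left Ideal.mul_le_inf)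
  have hunion : coprimeVariety (I • (⊤ : Submodule R M) ⊓ J • (⊤ : Submodule R M)) =
      coprimeVariety (I • (⊤ : Submodule R M)) ∪ coprimeVariety (J • (⊤ : Submodule R M)) :=
    (hV_inf_smul.trans <| hV_mul_smul.trans hV_mul.le).antisymm
      (union_subset_coprimeVariety_inf _ _)
  have hmul : coprimeVariety ((I * J) • (⊤ : Submodule R M)) =
      coprimeVariety (I • (⊤ : Submodule R M) ⊓ J • (⊤ : Submodule R M)) :=
    hV_mul.trans hunion.symm
  exact ⟨hunion, hV_inf_smul.antisymm (hV_mul_smul.trans hmul.le),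
    (hV_inf_smul.trans hV_mul_smul).antisymm hmul.le⟩
end

section
/- If M is a multiplication module, then every coprime submodule of M is strongly irreducible, and the set of coprime submodules equals the set of maximal submodules of M. -/
/-!
In a multiplication module every submodule `L` equals `(L : M) • M` with `(L : M)` two-sided, so
the coprime condition on `K` says that every submodule is contained in `K` or spans `M` together
with `K`: `K` is maximal. Conversely a maximal `K` is strongly irreducible: if `L₁ ⊄ K` then
`L₁ + K = M`, hence `L₂ = (L₂ : M)(L₁ + K) ⊆ (L₁ ∩ L₂) + K ⊆ K`.
-/

lemma IsCoatom.sup_eq_top_of_not_le {α : Type*} [Lattice α] [BoundedOrder α] {a b : α}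
    (ha : IsCoatom a) (hb : ¬b ≤ a) : b ⊔ a = ⊤ :=
  codisjoint_iff.mp (ha.not_le_iff_codisjoint.mp hb).symm

section

variable {R : Type*} [Ring R] {M : Type*} [AddCommGroup M] [Module R M]

lemma colonIdeal_isTwoSided (K : Submodule R M) : IsTwoSidedIdeal (colonIdeal K) := by
  intro r hr s m
  rw [mul_smul]
  exact hr _

lemma colonIdeal_smul_le (K N : Submodule R M) : colonIdeal K • N ≤ K :=
  Submodule.smul_le.mpr fun _ hr n _ => hr n

lemma IsCoatom.isCoprimeSubmodule {K : Submodule R M} (hK : IsCoatom K) :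
    IsCoprimeSubmodule K :=
  ⟨hK.ne_top, fun I _ => (em (I • ⊤ ≤ K)).symm.imp
    hK.sup_eq_top_of_not_le id⟩

lemma IsCoprimeSubmodule.sup_eq_top_or_le
    (hmul : ∀ L : Submodule R M, colonIdeal L • (⊤ : Submodule R M) = L)
    {K : Submodule R M} (hK : IsCoprimeSubmodule K) (L : Submodule R M) :
    L ⊔ K = ⊤ ∨ L ≤ K := by
  rw [← hmul L]
  exact hK.2 _ (colonIdeal_isTwoSided L)

lemma IsCoprimeSubmodule.isCoatom
    (hmul : ∀ L : Submodule R M, colonIdeal L • (⊤ : Submodule R M) = L)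
    {K : Submodule R M} (hK : IsCoprimeSubmodule K) : IsCoatom K := by
  refine ⟨hK.1, fun L hKL => ?_⟩
  rw [← sup_eq_left.mpr hKL.le]
  exact (hK.sup_eq_top_or_le hmul L).resolve_right hKL.not_ge

lemma IsCoatom.stronglyIrreducibleIn
    (hmul : ∀ L : Submodule R M, colonIdeal L • (⊤ : Submodule R M) = L)
    {K : Submodule R M} (hK : IsCoatom K) : StronglyIrreducibleIn K := by
  refine ⟨hK.ne_top, fun L₁ L₂ hle => or_iff_not_imp_left.mpr fun hL₁ => ?_⟩
  calc L₂ = colonIdeal L₂ • (L₁ ⊔ K) := by rw [hK.sup_eq_top_of_not_le hL₁, hmul]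
    _ = colonIdeal L₂ • L₁ ⊔ colonIdeal L₂ • K := Submodule.smul_sup _ _ _
    _ ≤ K := sup_le ((le_inf Submodule.smul_le_right (colonIdeal_smul_le L₂ L₁)).trans hle)
        Submodule.smul_le_right

end

/-- If `M` is a multiplication module, then every coprime submodule of
`M` is strongly irreducible, and the coprime submodules of `M` are exactly the maximal
submodules of `M`. -/
theorem statement18 {R M : Type*} [Ring R] [AddCommGroup M] [Module R M]
    (hmul : ∀ L : Submodule R M, colonIdeal L • (⊤ : Submodule R M) = L) :
    (∀ K : Submodule R M, IsCoprimeSubmodule K → StronglyIrreducibleIn K) ∧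
      (∀ K : Submodule R M, IsCoprimeSubmodule K ↔ IsCoatom K) :=
  ⟨fun _ hK => (hK.isCoatom hmul).stronglyIrreducibleIn hmul,
    fun _ => ⟨(·.isCoatom hmul), IsCoatom.isCoprimeSubmodule⟩⟩
end
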